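/- The EGF F(t,u,v) of forests of reduced rooted Greg hypertrees satisfies F = rev_t( ((v+1)·ln(1+ut)/u + v − v·exp(ln(1+ut)/u))·exp(−t) ). -/

import Mathlib

noncomputable section

/-- Composition `f(a)` of formal power series (the substitution of `a` into `f`,
valid when `a` has zero constant term). -/
def pcomp {R : Type*} [CommRing R] (f a : PowerSeries R) : PowerSeries R :=
  PowerSeries.mk fun n =>
    PowerSeries.coeff (R := R) n (∑ k ∈ Finset.range (n + 1),
      PowerSeries.C (R := R) (PowerSeries.coeff (R := R) k f) * a ^ k)

/-- Coefficient ring `ℚ[[u,v]]`. -/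
abbrev R2 : Type := MvPowerSeries (Fin 2) ℚ

/-- The hypertree weight variable `u`. -/
def uvar : R2 := MvPowerSeries.X 0

/-- The Greg weight (black vertices) variable `v`. -/
def vvar : R2 := MvPowerSeries.X 1

/-- `exp(t)` with coefficients in `ℚ[[u,v]]`. -/
def E2 : PowerSeries R2 := PowerSeries.exp R2

/-- `ln(1+ut)/u = Σ_{n≥1} (-1)^{n+1} u^{n-1} tⁿ/n`. -/
def Lgu2 : PowerSeries R2 :=
  PowerSeries.mk fun n => if n = 0 then 0 else ((-1 : ℚ) ^ (n + 1) / n) • uvar ^ (n - 1)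

/-!
Applying `log` to the first species equation gives `u·RG = ln(1 + u·FRG)`, i.e. `RG = L(FRG)`
with `L = ln(1+ut)/u`. The second equation, solved for `t`, reads
`t = ((1+v)·RG + v·(1 − exp RG))·exp(−FRG)`, which is `G(FRG)` for the series `G` on the
right-hand side. So `G` is a compositional left inverse of `FRG`; differentiating `G(FRG) = t`
shows that the linear coefficient of `FRG` is invertible, so `FRG` has a two-sided inverse,
which must be `G`.

`pcomp f a` agrees with Mathlib's `PowerSeries.subst a f` whenever `a` has zero constant
term, so the argument is carried out with `subst`.
-/

open PowerSeries

namespace PowerSeries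
variable {A : Type*} [CommRing A]

theorem coeff_pow_eq_zero_of_lt {a : A⟦X⟧} (ha : constantCoeff a = 0) {n k : ℕ} (h : n < k) :
    coeff n (a ^ k) = 0 :=
  X_pow_dvd_iff.mp (pow_dvd_pow_of_dvd (X_dvd_iff.mpr ha) k) n h

theorem pcomp_eq_subst {f a : A⟦X⟧} (ha : constantCoeff a = 0) : pcomp f a = subst a f := by
  ext n
  rw [pcomp, coeff_mk, coeff_subst' (HasSubst.of_constantCoeff_zero' ha),
    finsum_eq_sum_of_support_subset (s := Finset.range (n + 1)), map_sum]
  · simp [coeff_C_mul]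
  · intro k hk
    rw [Finset.coe_range, Set.mem_Iio]
    by_contra! hnk
    exact hk (by simp only [coeff_pow_eq_zero_of_lt ha (by omega : n < k), smul_zero])

theorem constantCoeff_pcomp (f a : A⟦X⟧) : constantCoeff (pcomp f a) = constantCoeff f := by
  rw [← coeff_zero_eq_constantCoeff_apply, pcomp, coeff_mk]
  simp

theorem isUnit_coeff_one_of_subst_eq_X {f g : A⟦X⟧} (hf : HasSubst f) (h : subst f g = X) :
    IsUnit (coeff 1 f) := by
  have hd := congrArg (d⁄dX A) h
  rw [derivative_subst hf, derivative_X] at hd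
  have hunit := IsUnit.of_mul_eq_one_right _ hd
  rw [isUnit_iff_constantCoeff, ← coeff_zero_eq_constantCoeff_apply, coeff_derivative] at hunit
  simpa using hunit

theorem subst_eq_X_of_subst_eq_X {f g : A⟦X⟧} (hf : constantCoeff f = 0) (h : subst f g = X) :
    subst g f = X := by
  have hf' := HasSubst.of_constantCoeff_zero' hf
  have hu := isUnit_coeff_one_of_subst_eq_X hf' h
  have hQ := HasSubst.substInvOfIsUnit f hu
  have : g = f.substInvOfIsUnit hu := by
    rw [← X_subst g, ← subst_substInvOfIsUnit_right f hf hu,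
      ← subst_comp_subst_apply hf' hQ, h, subst_X hQ]
  rw [this, subst_substInvOfIsUnit_right f hf hu]

section RatAlgebra
variable [Algebra ℚ A]

theorem one_add_X_mul_derivative_log : (1 + X) * d⁄dX A (log A) = 1 := by
  ext n
  rw [deriv_log, add_mul, one_mul, map_add]
  cases n with
  | zero => simp
  | succ n => simp [pow_succ]

theorem logOf_exp : logOf (exp A) = X := by
  have : IsAddTorsionFree A := .of_module_rat A
  have hE := HasSubst.exp_sub_one (A := A)
  refine derivative.ext ?_ ?_
  · have h := congrArg (substAlgHom hE) (one_add_X_mul_derivative_log (A := A))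
    rw [map_mul, map_add, map_one, substAlgHom_X, add_sub_cancel, coe_substAlgHom] at h
    rw [logOf_eq, derivative_subst hE, derivative_X, map_sub, derivative_exp, derivative_one, sub_zero,
      mul_comm, h]
  · rw [constantCoeff_X]
    exact constantCoeff_logOf constantCoeff_exp

theorem logOf_subst_exp {a : A⟦X⟧} (ha : HasSubst a) : logOf (subst a (exp A)) = a := by
  have h1 : subst a (exp A) - 1 = subst a (exp A - 1) := by
    rw [← coe_substAlgHom ha, map_sub, map_one]
  rw [logOf_eq, h1, ← subst_comp_subst_apply HasSubst.exp_sub_one ha, ← logOf_eq, logOf_exp,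
    subst_X ha]

theorem subst_exp_mul_subst_exp_neg {a : A⟦X⟧} (ha : HasSubst a) :
    subst a (exp A) * subst (-a) (exp A) = 1 := by
  have h := congrArg (substAlgHom ha) (exp_mul_exp_neg_eq_one (A := A))
  rw [map_mul, map_one, evalNegHom, rescale_eq_subst, coe_substAlgHom,
    subst_comp_subst_apply (HasSubst.smul_X' _) ha] at h
  have hna : subst a (-X : A⟦X⟧) = -a := by rw [← coe_substAlgHom ha, map_neg, substAlgHom_X]
  simpa [hna] using h

end RatAlgebra

end PowerSeries

theorem subst_eq_X_of_greg_equation {A : Type*} [CommRing A] [Algebra ℚ A] {v : A} {F R L : A⟦X⟧}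
    (hF : HasSubst F) (hL0 : HasSubst L) (hL : subst F L = R)
    (hR : R = X * subst F (exp A) + C v * (subst R (exp A) - R - 1)) :
    subst F (((1 + C v) * L + C v * (1 - subst L (exp A))) * subst (-X) (exp A)) = X := by
  have hLexp : subst F (subst L (exp A)) = subst R (exp A) := by
    rw [subst_comp_subst_apply hL0 hF, hL]
  have hnegX : subst F (subst (-X : A⟦X⟧) (exp A)) = subst (-F) (exp A) := by
    have hX : HasSubst (-X : A⟦X⟧) := HasSubst.of_constantCoeff_zero' (by simp)
    rw [subst_comp_subst_apply hX hF, ← coe_substAlgHom hF, map_neg, substAlgHom_X]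
  have hsolve : (1 + C v) * R + C v * (1 - subst R (exp A)) = X * subst F (exp A) := by
    linear_combination hR
  rw [← coe_substAlgHom hF]
  simp only [map_mul, map_add, map_sub, map_one, coe_substAlgHom]
  have hC : subst F (C v : A⟦X⟧) = C v := subst_C v
  rw [hC, hL, hLexp, hnegX, hsolve, mul_assoc, subst_exp_mul_subst_exp_neg hF, mul_one]

theorem C_uvar_ne_zero : C uvar ≠ 0 := by
  rw [ne_eq, map_eq_zero_iff _ C_injective]
  intro h
  simpa [uvar] using congrArg (MvPowerSeries.coeff (Finsupp.single 0 1)) h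

theorem C_uvar_mul_Lgu2 : C uvar * Lgu2 = rescale uvar (log R2) := by
  refine PowerSeries.ext fun n => ?_
  cases n with
  | zero => simp [Lgu2]
  | succ n =>
    simp [Lgu2, coeff_C_mul, Algebra.smul_def, pow_succ]
    ring

theorem subst_Lgu2_eq_of_subst_exp_eq {F R : R2⟦X⟧} (hF0 : constantCoeff F = 0)
    (hR0 : constantCoeff R = 0) (h : subst (C uvar * R) (exp R2) = 1 + C uvar * F) :
    subst F Lgu2 = R := by
  have hF := HasSubst.of_constantCoeff_zero' hF0
  have huR := HasSubst.of_constantCoeff_zero' (a := C uvar * R) (by simp [hR0])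
  have hR : C uvar * R = subst (C uvar * F) (log R2) := by
    rw [← logOf_subst_exp huR, h, logOf_eq, add_sub_cancel_left]
  have hL : C uvar * subst F Lgu2 = subst (C uvar * F) (log R2) :=
    calc C uvar * subst F Lgu2 = subst F (C uvar * Lgu2) := by
          rw [subst_mul hF, subst_C]; rfl
      _ = subst F (subst (uvar • X : R2⟦X⟧) (log R2)) := by
          rw [C_uvar_mul_Lgu2, rescale_eq_subst]
      _ = subst (C uvar * F) (log R2) := by
          rw [subst_comp_subst_apply (HasSubst.smul_X' _) hF, subst_smul hF, subst_X hF,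
            smul_eq_C_mul]
  exact mul_left_cancel₀ C_uvar_ne_zero (hL.trans hR.symm)

/-- The EGF `F(t,u,v)` of forests of reduced rooted Greg hypertrees, determined by the
species equations `FRG = (1/u)E_{≥1}(u·RG)` and `RG = X·E(FRG) + v·E_{≥2}(RG)`
(i.e. `exp(u·RG) = 1 + u·FRG` and `RG = t·exp(FRG) + v(exp(RG) − RG − 1)`), satisfies
`F = rev_t( ((v+1)·ln(1+ut)/u + v − v·exp(ln(1+ut)/u))·exp(−t) )`. -/
theorem forests_reduced_greg_hypertrees_egf
    (FRG RG : PowerSeries R2)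
    (hFRG0 : PowerSeries.constantCoeff (R := R2) FRG = 0)
    (hRG0 : PowerSeries.constantCoeff (R := R2) RG = 0)
    (hFRG : pcomp E2 (PowerSeries.C (R := R2) uvar * RG) = 1 + PowerSeries.C (R := R2) uvar * FRG)
    (hRG : RG = PowerSeries.X * pcomp E2 FRG
        + PowerSeries.C (R := R2) vvar * (pcomp E2 RG - RG - 1)) :
    pcomp (((1 + PowerSeries.C (R := R2) vvar) * Lgu2
        + PowerSeries.C (R := R2) vvar * (1 - pcomp E2 Lgu2)) * pcomp E2 (-PowerSeries.X))
      FRG = PowerSeries.X ∧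
    pcomp FRG (((1 + PowerSeries.C (R := R2) vvar) * Lgu2
        + PowerSeries.C (R := R2) vvar * (1 - pcomp E2 Lgu2)) * pcomp E2 (-PowerSeries.X))
      = PowerSeries.X := by
  have hL0 : constantCoeff Lgu2 = 0 := by simp [Lgu2, ← coeff_zero_eq_constantCoeff_apply]
  set G := ((1 + C vvar) * Lgu2 + C vvar * (1 - pcomp E2 Lgu2)) * pcomp E2 (-X) with hG
  have hG0 : constantCoeff G = 0 := by simp [G, constantCoeff_pcomp, hL0, E2, constantCoeff_exp]
  rw [pcomp_eq_subst hFRG0, pcomp_eq_subst hG0]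
  suffices hG : subst FRG G = X from ⟨hG, subst_eq_X_of_subst_eq_X hFRG0 hG⟩
  rw [pcomp_eq_subst (by simp [hRG0]), E2] at hFRG
  rw [pcomp_eq_subst hFRG0, pcomp_eq_subst hRG0, E2] at hRG
  rw [hG, pcomp_eq_subst hL0, pcomp_eq_subst (by simp), E2]
  exact subst_eq_X_of_greg_equation (HasSubst.of_constantCoeff_zero' hFRG0)
    (HasSubst.of_constantCoeff_zero' hL0) (subst_Lgu2_eq_of_subst_exp_eq hFRG0 hRG0 hFRG) hRG
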